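/- Let R be a Noetherian local ring of dimension d with maximal ideal m, and let E be a finitely generated R-module with minimal primes p₁,…,p_r of maximal dimension d. For any additive function φ on the category of finitely generated R-modules of dimension ≤ d which vanishes on modules of dimension < d, one has φ(E) = ∑_{i=1}^r φ(R/p_i) · L(E_{p_i}), where L(E_{p_i}) is the length of the localization E_{p_i} over R_{p_i}. -/

import Mathlib

/-!
Both sides of the identity are additive in `E` on short exact sequences of finitely generated
modules. For the right-hand side this is because localization is exact and, since
`dim R/pᵢ = dim R`, each `pᵢ` is a minimal prime of `R`, so `R_{pᵢ}` is Artinian and every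
`E_{pᵢ}` has finite length. A prime filtration thus reduces the identity to `E = R/q`: if
`dim R/q < d` both sides vanish, and otherwise `q` is one of the `pᵢ`, with `(R/q)_{pᵢ}` the
residue field of `R_q` when `pᵢ = q` and zero for the other `pᵢ`.
-/

noncomputable def moduleLength (R M : Type*) [Ring R] [AddCommGroup M] [Module R M] : ℕ∞ :=
  WithBot.unbotD 0 (Order.krullDim (Submodule R M))

noncomputable def moduleDim (R : Type u) (M : Type v) [CommRing R] [AddCommGroup M]
    [Module R M] : WithBot ℕ∞ :=
  ringKrullDim (R ⧸ Module.annihilator R M)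

universe u

theorem moduleLength_eq_length (R M : Type*) [Ring R] [AddCommGroup M] [Module R M] :
    moduleLength R M = Module.length R M := by
  rw [moduleLength, ← Module.coe_length, WithBot.unbotD_coe]

variable {R : Type u} [CommRing R]

open Order in
theorem Ideal.mem_minimalPrimes_of_ringKrullDim_quotient_eq {d : ℕ} (hdim : ringKrullDim R = d)
    {p : Ideal R} [hp : p.IsPrime] (h : ringKrullDim (R ⧸ p) = d) : p ∈ minimalPrimes R := by
  set P : PrimeSpectrum R := ⟨p, hp⟩
  have hcoheight : (coheight P : WithBot ℕ∞) = d := by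
    rw [← h, ringKrullDim_quotient, coheight_eq_krullDim_Ici]
    congr! 2
  have : Nonempty (PrimeSpectrum R) := ⟨P⟩
  have hsum : Order.height P + coheight P ≤ 0 + coheight P := by
    rw [zero_add, ← WithBot.coe_le_coe, hcoheight, ← hdim, ringKrullDim,
      krullDim_eq_iSup_height_add_coheight_of_nonempty]
    exact WithBot.coe_le_coe.mpr (le_iSup (fun a => Order.height a + coheight a) P)
  have hne_top : coheight P ≠ ⊤ := by
    rw [← WithBot.coe_inj.ne, hcoheight]
    exact WithBot.coe_injective.ne (ENat.natCast_ne_top d)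
  rw [← Ideal.height_eq_zero_iff, ← nonpos_iff_eq_zero, show p.height = Order.height P from
    P.height_eq_orderHeight]
  exact (WithTop.add_le_add_iff_right hne_top).mp hsum

noncomputable def localLength (p : Ideal R) [hp : p.IsPrime] (M : Type*) [AddCommGroup M]
    [Module R M] : ℕ :=
  (Module.length (Localization.AtPrime p) (LocalizedModule p.primeCompl M)).toNat

section localLength

variable (p : Ideal R) [hp : p.IsPrime] {M N P : Type*} [AddCommGroup M] [Module R M]
  [AddCommGroup N] [Module R N] [AddCommGroup P] [Module R P]

theorem LinearEquiv.localLength_eq (e : M ≃ₗ[R] N) : localLength p M = localLength p N := by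
  rw [localLength, localLength, (IsLocalizedModule.mapEquiv p.primeCompl
    (LocalizedModule.mkLinearMap p.primeCompl M) (LocalizedModule.mkLinearMap p.primeCompl N)
    _ e).length_eq]

theorem localLength_eq_zero_of_not_le [Module.Finite R M] (h : ¬ Module.annihilator R M ≤ p) :
    localLength p M = 0 := by
  have : Subsingleton (LocalizedModule p.primeCompl M) := by
    rwa [← Module.notMem_support_iff (p := ⟨p, hp⟩), Module.mem_support_iff_of_finite]
  simp [localLength]

instance : IsSimpleModule (Localization.AtPrime p) (LocalizedModule p.primeCompl (R ⧸ p)) := by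
  rw [isSimpleModule_iff_toSpanSingleton_surjective]
  refine ⟨?_, fun x hx y => ?_⟩
  · rw [← Module.mem_support_iff (p := ⟨p, hp⟩), Module.mem_support_iff_of_finite,
      Ideal.annihilator_quotient]
  induction x using LocalizedModule.induction_on with | _ a s => ?_
  induction y using LocalizedModule.induction_on with | _ b t => ?_
  obtain ⟨a, rfl⟩ := Ideal.Quotient.mk_surjective a
  obtain ⟨b, rfl⟩ := Ideal.Quotient.mk_surjective b
  have ha : a ∈ p.primeCompl := fun hap => hx (by
    rw [Ideal.Quotient.eq_zero_iff_mem.mpr hap, LocalizedModule.zero_mk])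
  refine ⟨Localization.mk (b * s) ⟨a * t, mul_mem ha t.2⟩, ?_⟩
  rw [LinearMap.toSpanSingleton_apply, LocalizedModule.mk_smul_mk, LocalizedModule.mk_eq]
  refine ⟨1, ?_⟩
  simp only [one_smul, Submonoid.smul_def, Submonoid.coe_mul, Algebra.smul_def,
    Ideal.Quotient.algebraMap_eq, ← map_mul]
  ring_nf

theorem localLength_quotient_of_mem_minimalPrimes (hmin : p ∈ minimalPrimes R) (q : Ideal R)
    [hq : q.IsPrime] : localLength p (R ⧸ q) = if q = p then 1 else 0 := by
  split_ifs with hqp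
  · subst hqp
    simp [localLength]
  · refine localLength_eq_zero_of_not_le p fun hle => hqp ?_
    rw [Ideal.annihilator_quotient] at hle
    exact le_antisymm hle (hmin.2 ⟨hq, bot_le⟩ hle)

theorem length_localizedModule_ne_top [IsNoetherianRing R] (hmin : p ∈ minimalPrimes R)
    [Module.Finite R M] :
    Module.length (Localization.AtPrime p) (LocalizedModule p.primeCompl M) ≠ ⊤ := by
  have : Ring.KrullDimLE 0 (Localization.AtPrime p) := .of_isLocalization p hmin _
  have : IsArtinianRing (Localization.AtPrime p) := isArtinianRing_iff_krullDimLE_zero.mpr this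
  exact Module.length_ne_top

theorem localLength_eq_add_of_exact [IsNoetherianRing R] (hmin : p ∈ minimalPrimes R)
    [Module.Finite R M] [Module.Finite R P] (f : M →ₗ[R] N) (g : N →ₗ[R] P)
    (hf : Function.Injective f) (hg : Function.Surjective g) (hfg : Function.Exact f g) :
    localLength p N = localLength p M + localLength p P := by
  rw [localLength, Module.length_eq_add_of_exact _ _ (LocalizedModule.map_injective _ f hf)
    (LocalizedModule.map_surjective _ g hg) (LocalizedModule.map_exact _ f g hfg),
    ENat.toNat_add (length_localizedModule_ne_top p hmin) (length_localizedModule_ne_top p hmin)]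
  rfl

theorem sum_mul_localLength_quotient (ps : Finset (Ideal R)) (hprime : ∀ p ∈ ps, p.IsPrime)
    (hmin : ∀ p ∈ ps, p ∈ minimalPrimes R) (c : Ideal R → ℤ) (q : Ideal R) [q.IsPrime] :
    ∑ p ∈ ps.attach, c p * localLength (hp := hprime p p.2) (p : Ideal R) (R ⧸ q) =
      if q ∈ ps then c q else 0 := by
  have hterm (p : ps) : c p * localLength (hp := hprime p p.2) (p : Ideal R) (R ⧸ q) =
      c p * if q = p then 1 else 0 := by
    rw [localLength_quotient_of_mem_minimalPrimes (hp := hprime p p.2) _ (hmin p p.2)]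
    push_cast
    rfl
  rw [Finset.sum_congr rfl fun p _ => hterm p,
    Finset.sum_attach ps fun p => c p * if q = p then 1 else 0]
  simp only [mul_ite, mul_one, mul_zero, Finset.sum_ite_eq]

end localLength

theorem moduleDim_le_ringKrullDim (M : Type*) [AddCommGroup M] [Module R M] :
    moduleDim R M ≤ ringKrullDim R :=
  ringKrullDim_quotient_le _

theorem moduleDim_eq_bot_of_subsingleton (M : Type*) [AddCommGroup M] [Module R M]
    [Subsingleton M] : moduleDim R M = ⊥ := by
  rw [moduleDim, Module.annihilator_eq_top_iff.mpr ‹_›, ringKrullDim_eq_bot_of_subsingleton]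

def IsAdditiveOnDimLE (d : ℕ) (φ : ModuleCat.{u} R → ℤ) : Prop :=
  ∀ (M N P : ModuleCat.{u} R) (f : M →ₗ[R] N) (g : N →ₗ[R] P),
    Function.Injective f → Function.Surjective g → Function.Exact f g →
    Module.Finite R M → Module.Finite R N → Module.Finite R P →
    moduleDim R M ≤ d → moduleDim R N ≤ d → moduleDim R P ≤ d →
    φ N = φ M + φ P

namespace IsAdditiveOnDimLE

variable {d : ℕ} {φ : ModuleCat.{u} R → ℤ} {M N P : Type u} [AddCommGroup M] [Module R M]
  [AddCommGroup N] [Module R N] [AddCommGroup P] [Module R P]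
  [Module.Finite R M] [Module.Finite R N] [Module.Finite R P]

theorem eq_add_of_exact (hφ : IsAdditiveOnDimLE d φ) (hdim : ringKrullDim R = d)
    (f : M →ₗ[R] N) (g : N →ₗ[R] P) (hf : Function.Injective f) (hg : Function.Surjective g)
    (hfg : Function.Exact f g) :
    φ (ModuleCat.of R N) = φ (ModuleCat.of R M) + φ (ModuleCat.of R P) :=
  hφ (.of R M) (.of R N) (.of R P) f g hf hg hfg ‹_› ‹_› ‹_›
    (hdim ▸ moduleDim_le_ringKrullDim M) (hdim ▸ moduleDim_le_ringKrullDim N)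
    (hdim ▸ moduleDim_le_ringKrullDim P)

theorem eq_of_linearEquiv (hφ : IsAdditiveOnDimLE d φ) (hdim : ringKrullDim R = d)
    (hvanish : ∀ M : ModuleCat.{u} R, Module.Finite R M → moduleDim R M < d → φ M = 0)
    (e : M ≃ₗ[R] N) : φ (ModuleCat.of R M) = φ (ModuleCat.of R N) := by
  have hzero : φ (ModuleCat.of R PUnit.{u + 1}) = 0 :=
    hvanish _ inferInstance (by simp [moduleDim_eq_bot_of_subsingleton])
  rw [hφ.eq_add_of_exact hdim (0 : PUnit.{u + 1} →ₗ[R] M) e.toLinearMap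
    (Function.injective_of_subsingleton _) e.surjective
    ((LinearMap.exact_zero_iff_injective _ _).mpr e.injective), hzero, zero_add]

end IsAdditiveOnDimLE

theorem eq_sum_localLength_of_isAdditiveOnDimLE [IsNoetherianRing R] {d : ℕ}
    (hdim : ringKrullDim R = d) {φ : ModuleCat.{u} R → ℤ} (hφ : IsAdditiveOnDimLE d φ)
    (hvanish : ∀ M : ModuleCat.{u} R, Module.Finite R M → moduleDim R M < d → φ M = 0)
    (ps : Finset (Ideal R)) (hprime : ∀ p ∈ ps, p.IsPrime)
    (hps : ∀ p ∈ ps, ringKrullDim (R ⧸ p) = d) (M : Type u) [AddCommGroup M] [Module R M]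
    [Module.Finite R M]
    (hM : ∀ p : Ideal R, p.IsPrime → Module.annihilator R M ≤ p → ringKrullDim (R ⧸ p) = d →
      p ∈ ps) :
    φ (ModuleCat.of R M) = ∑ p ∈ ps.attach, φ (ModuleCat.of R (R ⧸ (p : Ideal R))) *
      localLength (hp := hprime p p.2) (p : Ideal R) M := by
  have hmin (p : Ideal R) (hp : p ∈ ps) : p ∈ minimalPrimes R :=
    have := hprime p hp
    p.mem_minimalPrimes_of_ringKrullDim_quotient_eq hdim (hps p hp)
  induction ‹Module.Finite R M› using IsNoetherianRing.induction_on_isQuotientEquivQuotientPrime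
    with
  | subsingleton N =>
    rw [hvanish _ inferInstance (by simp [moduleDim_eq_bot_of_subsingleton])]
    refine (Finset.sum_eq_zero fun p _ => ?_).symm
    have hnle : ¬ Module.annihilator R N ≤ p := by
      rw [Module.annihilator_eq_top_iff.mpr ‹_›, top_le_iff]
      exact (hprime p p.2).ne_top
    rw [localLength_eq_zero_of_not_le (hp := hprime p p.2) _ hnle, Nat.cast_zero, mul_zero]
  | quotient N q e =>
    rw [hφ.eq_of_linearEquiv hdim hvanish e, Finset.sum_congr rfl fun (p : ps) _ => by
        rw [e.localLength_eq (hp := hprime p p.2)],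
      sum_mul_localLength_quotient ps hprime hmin fun p => φ (ModuleCat.of R (R ⧸ p))]
    split_ifs with hqps
    · rfl
    · refine hvanish _ inferInstance (lt_of_le_of_ne (hdim ▸ moduleDim_le_ringKrullDim _)
        fun hdimq => hqps ?_)
      rw [moduleDim, Ideal.annihilator_quotient] at hdimq
      exact hM q.1 q.2 (by rw [e.annihilator_eq, Ideal.annihilator_quotient]) hdimq
  | exact N₁ N₂ N₃ f g hf hg hfg ih₁ ih₃ =>
    rw [hφ.eq_add_of_exact hdim f g hf hg hfg,
      ih₁ fun p hp hle => hM p hp ((f.annihilator_le_of_injective hf).trans hle),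
      ih₃ fun p hp hle => hM p hp ((g.annihilator_le_of_surjective hg).trans hle),
      ← Finset.sum_add_distrib]
    refine Finset.sum_congr rfl fun p _ => ?_
    rw [localLength_eq_add_of_exact (hp := hprime p p.2) _ (hmin p p.2) f g hf hg hfg,
      Nat.cast_add, mul_add]

theorem additive_function_eq_sum_minimal_primes_general {R : Type u} [CommRing R]
    [IsNoetherianRing R] (d : ℕ) (hdim : ringKrullDim R = d)
    (E : Type u) [AddCommGroup E] [Module R E] [Module.Finite R E]
    (φ : ModuleCat.{u} R → ℤ)
    (hadd : ∀ (M N P : ModuleCat.{u} R) (f : M →ₗ[R] N) (g : N →ₗ[R] P),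
      Function.Injective f → Function.Surjective g → Function.Exact f g →
      Module.Finite R M → Module.Finite R N → Module.Finite R P →
      moduleDim R M ≤ d → moduleDim R N ≤ d → moduleDim R P ≤ d →
      φ N = φ M + φ P)
    (hvanish : ∀ M : ModuleCat.{u} R, Module.Finite R M → moduleDim R M < d → φ M = 0)
    (ps : Finset (Ideal R))
    (hps : ∀ p : Ideal R, p ∈ ps ↔
      p ∈ (Module.annihilator R E).minimalPrimes ∧ ringKrullDim (R ⧸ p) = d)
    (hprime : ∀ p ∈ ps, p.IsPrime) :
    φ (ModuleCat.of R E) =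
      ∑ p ∈ ps.attach,
        φ (ModuleCat.of R (R ⧸ (p : Ideal R))) *
          ((moduleLength (Localization.AtPrime (p : Ideal R)
              (hp := hprime p p.2))
            (LocalizedModule ((p : Ideal R).primeCompl (hp := hprime p p.2)) E)).toNat : ℤ) := by
  have hsupp (p : Ideal R) (hp : p.IsPrime) (hle : Module.annihilator R E ≤ p)
      (hpd : ringKrullDim (R ⧸ p) = d) : p ∈ ps :=
    have hmin := p.mem_minimalPrimes_of_ringKrullDim_quotient_eq hdim hpd
    (hps p).mpr ⟨⟨⟨hp, hle⟩, fun q hq hqp => hmin.2 ⟨hq.1, bot_le⟩ hqp⟩, hpd⟩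
  rw [eq_sum_localLength_of_isAdditiveOnDimLE hdim hadd hvanish ps hprime
    (fun p hp => ((hps p).mp hp).2) E hsupp]
  simp only [localLength, moduleLength_eq_length]

/-- Let `R` be a Noetherian local ring of dimension `d` and `E` a finitely generated
`R`-module of dimension `d` with minimal primes `p₁,…,p_r` of maximal dimension `d`.
For any additive function `φ` on finitely generated modules of dimension `≤ d` vanishing on
those of dimension `< d`, one has `φ(E) = ∑ᵢ φ(R/pᵢ) · L(E_{pᵢ})`. -/
theorem additive_function_eq_sum_minimal_primes {R : Type u} [CommRing R]
    [IsNoetherianRing R] [IsLocalRing R] (d : ℕ) (hdim : ringKrullDim R = d)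
    (E : Type u) [AddCommGroup E] [Module R E] [Module.Finite R E]
    (hE : moduleDim R E = d)
    (φ : ModuleCat.{u} R → ℤ)
    (hadd : ∀ (M N P : ModuleCat.{u} R) (f : M →ₗ[R] N) (g : N →ₗ[R] P),
      Function.Injective f → Function.Surjective g → Function.Exact f g →
      Module.Finite R M → Module.Finite R N → Module.Finite R P →
      moduleDim R M ≤ d → moduleDim R N ≤ d → moduleDim R P ≤ d →
      φ N = φ M + φ P)
    (hvanish : ∀ M : ModuleCat.{u} R, Module.Finite R M → moduleDim R M < d → φ M = 0)
    (ps : Finset (Ideal R))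
    (hps : ∀ p : Ideal R, p ∈ ps ↔
      p ∈ (Module.annihilator R E).minimalPrimes ∧ ringKrullDim (R ⧸ p) = d)
    (hprime : ∀ p ∈ ps, p.IsPrime) :
    φ (ModuleCat.of R E) =
      ∑ p ∈ ps.attach,
        φ (ModuleCat.of R (R ⧸ (p : Ideal R))) *
          ((moduleLength (Localization.AtPrime (p : Ideal R)
              (hp := hprime p p.2))
            (LocalizedModule ((p : Ideal R).primeCompl (hp := hprime p p.2)) E)).toNat : ℤ) :=
  additive_function_eq_sum_minimal_primes_general d hdim E φ hadd hvanish ps hps hprime
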